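/- (Consistency of scale mixtures; the 'if' direction of Kano's theorem.) Let N ≥ 1, let Σ ∈ ℝ^{(N+1)×(N+1)} be symmetric positive definite with leading N×N principal submatrix Σ₁₁, let μ = (μ₁, μ_{N+1}) ∈ ℝ^{N+1} with μ₁ ∈ ℝ^N, and let p_ξ be a probability density on (0,∞). Then for every y ∈ ℝ^N, ∫_ℝ p_{μ,Σ}((y, t)) dt = p_{μ₁,Σ₁₁}(y), where p_{μ,Σ} and p_{μ₁,Σ₁₁} are the (N+1)-dimensional and N-dimensional scale-mixture elliptical densities built from the same mixing density p_ξ. That is, the family of scale-mixture elliptical densities with a fixed mixing density is closed under marginalization of the last coordinate. -/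

import Mathlib

/-!
Completing the square in the last coordinate writes the quadratic form of `Σ⁻¹` at `(y, t) - μ`
as `α (t - c)² + (y - μ₁)ᵀ Σ₁₁⁻¹ (y - μ₁)`, where `α = (Σ⁻¹)_{N+1,N+1}` satisfies
`det Σ · α = det Σ₁₁` by the cofactor formula. For each scale `ξ` the `t`-integral of the
`(N+1)`-dimensional Gaussian kernel is therefore `α^{-1/2}` times the `N`-dimensional one, and
Tonelli exchanges the `t`- and `ξ`-integrals; this is valid even when the mixture integral
diverges, because for `t ≠ c` the kernel is bounded in `ξ` and `p_ξ` is integrable.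
-/

open MeasureTheory Matrix Real
open scoped ENNReal

/-- The scale-mixture elliptical density
`p_{μ,Σ}(y) = det(Σ)^{-1/2} ∫₀^∞ (2πξ)^{-N/2} exp(-u(y)/(2ξ)) p_ξ(ξ) dξ`,
where `u(y) = (y-μ)ᵀ Σ⁻¹ (y-μ)`. -/
noncomputable def ellipticalDensity {N : ℕ} (μ : Fin N → ℝ) (S : Matrix (Fin N) (Fin N) ℝ)
    (pxi : ℝ → ℝ) (y : Fin N → ℝ) : ℝ :=
  S.det ^ (-(1 : ℝ) / 2) *
    ∫ ξ in Set.Ioi (0 : ℝ),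
      (2 * π * ξ) ^ (-(N : ℝ) / 2) *
        Real.exp (-((y - μ) ⬝ᵥ (S⁻¹ *ᵥ (y - μ))) / (2 * ξ)) * pxi ξ

theorem Fin.snoc_sub {n : ℕ} {β : Type*} [Sub β] (y : Fin n → β) (t : β) (z : Fin (n + 1) → β) :
    Fin.snoc y t - z = Fin.snoc (y - Fin.init z) (t - z (Fin.last n)) := by
  ext i
  refine Fin.lastCases ?_ (fun i => ?_) i <;> simp [Fin.init]

namespace Matrix

variable {K : Type*} [Field K] {N : ℕ}

theorem det_mul_inv_apply_last_last (S : Matrix (Fin (N + 1)) (Fin (N + 1)) K)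
    (hS : S.det ≠ 0) :
    S.det * S⁻¹ (Fin.last N) (Fin.last N) = (S.submatrix Fin.castSucc Fin.castSucc).det := by
  rw [inv_def, smul_apply, smul_eq_mul, Ring.inverse_eq_inv', ← mul_assoc,
    mul_inv_cancel₀ hS, one_mul, adjugate_fin_succ_eq_det_submatrix, Fin.succAbove_last,
    ← two_mul, pow_mul, neg_one_sq, one_pow, one_mul]

theorem mulVec_snoc_zero_castSucc (S : Matrix (Fin (N + 1)) (Fin (N + 1)) K) (v : Fin N → K)
    (i : Fin N) :
    (S *ᵥ Fin.snoc v 0) i.castSucc = (S.submatrix Fin.castSucc Fin.castSucc *ᵥ v) i := by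
  simp [mulVec, dotProduct, Fin.sum_univ_castSucc]

theorem snoc_dotProduct_inv_mulVec_snoc (S : Matrix (Fin (N + 1)) (Fin (N + 1)) K)
    (hS : S.IsSymm) (hdet : S.det ≠ 0) (hA : (S.submatrix Fin.castSucc Fin.castSucc).det ≠ 0)
    (x : Fin N → K) :
    ∃ s₀, ∀ s, Fin.snoc x s ⬝ᵥ S⁻¹ *ᵥ Fin.snoc x s =
      S⁻¹ (Fin.last N) (Fin.last N) * (s - s₀) ^ 2 +
        x ⬝ᵥ (S.submatrix Fin.castSucc Fin.castSucc)⁻¹ *ᵥ x := by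
  set A := S.submatrix Fin.castSucc Fin.castSucc
  set v := A⁻¹ *ᵥ x
  -- `S (A⁻¹ x, 0)` has the form `(x, s₀)`, and `S⁻¹ (x, s₀) = (A⁻¹ x, 0)` is orthogonal to the
  -- last axis: `s₀` is the vertex of the parabola.
  set s₀ := (S *ᵥ Fin.snoc v 0) (Fin.last N)
  have hw : S *ᵥ Fin.snoc v 0 = Fin.snoc x s₀ := by
    ext i
    refine Fin.lastCases (by simp [s₀]) (fun i => ?_) i
    rw [mulVec_snoc_zero_castSucc, Fin.snoc_castSucc, mulVec_mulVec,
      mul_nonsing_inv _ (isUnit_iff_ne_zero.2 hA), one_mulVec]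
  have hTw : S⁻¹ *ᵥ Fin.snoc x s₀ = Fin.snoc v 0 := by
    rw [← hw, mulVec_mulVec, nonsing_inv_mul _ (isUnit_iff_ne_zero.2 hdet), one_mulVec]
  have hT : (S⁻¹)ᵀ = S⁻¹ := by rw [transpose_nonsing_inv, hS.eq]
  refine ⟨s₀, fun s => ?_⟩
  have hline :
      Fin.snoc x s = Fin.snoc x s₀ + (Pi.single (Fin.last N) (s - s₀) : Fin (N + 1) → K) := by
    ext i
    refine Fin.lastCases ?_ (fun i => ?_) i <;> simp
  have hwv : Fin.snoc x s₀ ⬝ᵥ Fin.snoc v 0 = x ⬝ᵥ v := by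
    simp [dotProduct, Fin.sum_univ_castSucc]
  have hcross : Fin.snoc x s₀ ⬝ᵥ S⁻¹ *ᵥ (Pi.single (Fin.last N) (s - s₀)) = 0 := by
    rw [dotProduct_mulVec, ← hT, vecMul_transpose, hTw, dotProduct_single]
    simp
  rw [hline, mulVec_add, dotProduct_add, add_dotProduct, add_dotProduct, hTw, hwv, hcross,
    single_dotProduct, single_dotProduct, mulVec_single]
  simp only [Fin.snoc_last, Pi.smul_apply, col_apply, MulOpposite.smul_eq_mul_unop,
    MulOpposite.unop_op]
  ring

end Matrix

theorem Real.rpow_mul_exp_neg_le {r u : ℝ} (hr : 0 ≤ r) (hu : 0 ≤ u) :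
    u ^ r * exp (-u) ≤ (r / exp 1) ^ r := by
  rcases hr.eq_or_lt with rfl | hr
  · simpa using hu
  have key : u * exp (-(u / r)) = r * (u / r * exp (-(u / r))) := by field_simp
  calc u ^ r * exp (-u) = (u * exp (-(u / r))) ^ r := by
        rw [mul_rpow hu (exp_pos _).le, ← exp_mul]; field_simp
    _ ≤ (r * exp (-1)) ^ r := by
        refine rpow_le_rpow (by positivity) ?_ hr.le
        rw [key]
        exact mul_le_mul_of_nonneg_left (mul_exp_neg_le_exp_neg_one _) hr.le
    _ = (r / exp 1) ^ r := by rw [exp_neg, div_eq_mul_inv]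

/-- The density of the centred Gaussian with covariance `ξ • 1` on `ℝⁿ`, at a point of squared
norm `Q`. -/
noncomputable def radialGaussianPDF (n : ℕ) (ξ Q : ℝ) : ℝ :=
  (2 * π * ξ) ^ (-(n : ℝ) / 2) * exp (-Q / (2 * ξ))

namespace radialGaussianPDF

variable {n : ℕ} {ξ Q : ℝ}

theorem nonneg (hξ : 0 ≤ ξ) : 0 ≤ radialGaussianPDF n ξ Q := by
  unfold radialGaussianPDF; positivity

theorem exists_le (hQ : 0 < Q) : ∃ C, ∀ ξ, 0 < ξ → radialGaussianPDF n ξ Q ≤ C := by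
  refine ⟨(π * Q) ^ (-(n : ℝ) / 2) * ((n / 2 : ℝ) / exp 1) ^ (n / 2 : ℝ), fun ξ hξ => ?_⟩
  have hu : 0 < Q / (2 * ξ) := by positivity
  have h2πξ : 2 * π * ξ = π * Q * (Q / (2 * ξ))⁻¹ := by field_simp
  calc radialGaussianPDF n ξ Q
      = (π * Q) ^ (-(n : ℝ) / 2) * ((Q / (2 * ξ)) ^ (n / 2 : ℝ) * exp (-(Q / (2 * ξ)))) := by
        rw [radialGaussianPDF, h2πξ, mul_rpow (by positivity) (by positivity), inv_rpow hu.le,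
          ← rpow_neg hu.le, neg_div, neg_neg, neg_div]
        ring
    _ ≤ _ := by
        gcongr
        exact rpow_mul_exp_neg_le (by positivity) hu.le

theorem add_sq (α c m t : ℝ) :
    radialGaussianPDF n ξ (α * (t - c) ^ 2 + m) =
      radialGaussianPDF n ξ m * exp (-(α / (2 * ξ)) * (t - c) ^ 2) := by
  rw [radialGaussianPDF, radialGaussianPDF, mul_assoc _ (exp _), ← exp_add]
  ring_nf

theorem integrable_add_sq {α : ℝ} (hα : 0 < α) (hξ : 0 < ξ) (c m : ℝ) :
    Integrable fun t => radialGaussianPDF n ξ (α * (t - c) ^ 2 + m) := by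
  simp_rw [add_sq]
  exact ((integrable_exp_neg_mul_sq (by positivity)).comp_sub_right c).const_mul _

theorem integral_succ_add_sq {α : ℝ} (hα : 0 < α) (hξ : 0 < ξ) (c m : ℝ) :
    ∫ t, radialGaussianPDF (n + 1) ξ (α * (t - c) ^ 2 + m) =
      α ^ (-(1 : ℝ) / 2) * radialGaussianPDF n ξ m := by
  simp_rw [add_sq]
  rw [integral_const_mul, integral_sub_right_eq_self (fun t => exp (-(α / (2 * ξ)) * t ^ 2)),
    integral_gaussian, div_div_eq_mul_div, sqrt_eq_rpow, div_rpow (by positivity) hα.le,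
    div_eq_mul_inv _ (α ^ _), ← rpow_neg hα.le, radialGaussianPDF, radialGaussianPDF]
  have h2πξ : 0 < 2 * π * ξ := by positivity
  calc (2 * π * ξ) ^ (-((n + 1 : ℕ) : ℝ) / 2) * exp (-m / (2 * ξ)) *
        ((π * (2 * ξ)) ^ (1 / 2 : ℝ) * α ^ (-(1 / 2) : ℝ))
      = α ^ (-(1 / 2) : ℝ) * (((2 * π * ξ) ^ (-((n + 1 : ℕ) : ℝ) / 2) *
          (2 * π * ξ) ^ (1 / 2 : ℝ)) * exp (-m / (2 * ξ))) := by ring_nf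
    _ = _ := by
      rw [← rpow_add h2πξ, show -((n + 1 : ℕ) : ℝ) / 2 + 1 / 2 = -(n : ℝ) / 2 by push_cast; ring,
        show -(1 / 2 : ℝ) = -1 / 2 by norm_num]

end radialGaussianPDF

namespace MeasureTheory

variable {X Y : Type*} [MeasurableSpace X] [MeasurableSpace Y] {μ : Measure X} {ν : Measure Y}
  [SFinite ν] {f : X → Y → ℝ}

theorem integral_integral_eq_toReal_lintegral_lintegral (hf : Measurable (Function.uncurry f))
    (hf0 : ∀ᵐ x ∂μ, 0 ≤ᵐ[ν] f x) (hfin : ∀ᵐ x ∂μ, ∫⁻ y, ENNReal.ofReal (f x y) ∂ν ≠ ∞) :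
    ∫ x, ∫ y, f x y ∂ν ∂μ = (∫⁻ x, ∫⁻ y, ENNReal.ofReal (f x y) ∂ν ∂μ).toReal := by
  have hinner : ∀ᵐ x ∂μ, ∫ y, f x y ∂ν = (∫⁻ y, ENNReal.ofReal (f x y) ∂ν).toReal :=
    hf0.mono fun x hx =>
      integral_eq_lintegral_of_nonneg_ae hx (hf.comp measurable_prodMk_left).aestronglyMeasurable
  rw [integral_congr_ae hinner, integral_toReal _ (hfin.mono fun x hx => hx.lt_top)]
  exact ((ENNReal.measurable_ofReal.comp hf).lintegral_prod_right').aemeasurable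

/-- No integrability is needed: when the inner integrals are finite almost everywhere, both sides
are `toReal` of the same `ℝ≥0∞`-valued double integral, finite or not. -/
theorem integral_integral_swap_of_nonneg [SFinite μ] (hf : Measurable (Function.uncurry f))
    (hf0 : ∀ᵐ x ∂μ, 0 ≤ᵐ[ν] f x)
    (hx : ∀ᵐ x ∂μ, ∫⁻ y, ENNReal.ofReal (f x y) ∂ν ≠ ∞)
    (hy : ∀ᵐ y ∂ν, ∫⁻ x, ENNReal.ofReal (f x y) ∂μ ≠ ∞) :
    ∫ x, ∫ y, f x y ∂ν ∂μ = ∫ y, ∫ x, f x y ∂μ ∂ν := by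
  have hf' : Measurable (Function.uncurry fun y x => f x y) := hf.comp measurable_swap
  have hf0' : ∀ᵐ y ∂ν, ∀ᵐ x ∂μ, 0 ≤ f x y :=
    (Measure.ae_ae_comm (p := fun x y => 0 ≤ f x y) (measurableSet_le measurable_const hf)).1 hf0
  rw [integral_integral_eq_toReal_lintegral_lintegral hf hf0 hx,
    integral_integral_eq_toReal_lintegral_lintegral hf' hf0' hy,
    lintegral_lintegral_swap (f := fun x y => ENNReal.ofReal (f x y))
      (ENNReal.measurable_ofReal.comp hf).aemeasurable]

end MeasureTheory

open Set in
theorem integral_setIntegral_radialGaussianPDF_succ {n : ℕ} {α m : ℝ} (hα : 0 < α) (hm : 0 ≤ m)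
    (c : ℝ) {p : ℝ → ℝ} (hp : Measurable p) (hp0 : ∀ᵐ ξ ∂volume.restrict (Ioi 0), 0 ≤ p ξ)
    (hpi : IntegrableOn p (Ioi 0)) :
    ∫ t, ∫ ξ in Ioi 0, radialGaussianPDF (n + 1) ξ (α * (t - c) ^ 2 + m) * p ξ =
      α ^ (-(1 : ℝ) / 2) * ∫ ξ in Ioi 0, radialGaussianPDF n ξ m * p ξ := by
  set F : ℝ → ℝ → ℝ := fun t ξ => radialGaussianPDF (n + 1) ξ (α * (t - c) ^ 2 + m) * p ξ
  have hF : Measurable (Function.uncurry F) := by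
    simp only [F, radialGaussianPDF]; fun_prop
  have hF0 : ∀ᵐ t, 0 ≤ᵐ[volume.restrict (Ioi 0)] F t :=
    .of_forall fun t => (hp0.and (ae_restrict_mem measurableSet_Ioi)).mono
      fun ξ hξ => mul_nonneg (radialGaussianPDF.nonneg (le_of_lt hξ.2)) hξ.1
  have hfin_t : ∀ᵐ t, ∫⁻ ξ in Ioi 0, ENNReal.ofReal (F t ξ) ≠ ∞ := by
    filter_upwards [Measure.ae_ne volume c] with t ht
    obtain ⟨C, hC⟩ := radialGaussianPDF.exists_le (n := n + 1)
      (Q := α * (t - c) ^ 2 + m) (by have := sub_ne_zero.2 ht; positivity)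
    refine (Integrable.lintegral_lt_top ((hpi.const_mul C).mono'
      (hF.comp measurable_prodMk_left : Measurable (F t)).aestronglyMeasurable ?_)).ne
    filter_upwards [hp0, ae_restrict_mem measurableSet_Ioi] with ξ hpξ hξ
    change ‖F t ξ‖ ≤ C * p ξ
    rw [Real.norm_of_nonneg (mul_nonneg (radialGaussianPDF.nonneg (le_of_lt hξ)) hpξ)]
    exact mul_le_mul_of_nonneg_right (hC ξ hξ) hpξ
  have hfin_ξ : ∀ᵐ ξ ∂volume.restrict (Ioi 0), ∫⁻ t, ENNReal.ofReal (F t ξ) ≠ ∞ :=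
    ae_restrict_of_forall_mem measurableSet_Ioi fun ξ hξ =>
      ((radialGaussianPDF.integrable_add_sq hα hξ c m).mul_const (p ξ)).lintegral_lt_top.ne
  rw [integral_integral_swap_of_nonneg hF hF0 hfin_t hfin_ξ, ← integral_const_mul]
  refine setIntegral_congr_fun measurableSet_Ioi fun ξ hξ => ?_
  simp only [F]
  rw [integral_mul_const, radialGaussianPDF.integral_succ_add_sq hα hξ]
  ring

theorem ellipticalDensity_eq {N : ℕ} (μ : Fin N → ℝ) (S : Matrix (Fin N) (Fin N) ℝ)
    (pxi : ℝ → ℝ) (y : Fin N → ℝ) :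
    ellipticalDensity μ S pxi y = S.det ^ (-(1 : ℝ) / 2) *
      ∫ ξ in Set.Ioi 0, radialGaussianPDF N ξ ((y - μ) ⬝ᵥ S⁻¹ *ᵥ (y - μ)) * pxi ξ :=
  rfl

theorem ellipticalDensity_marginal_lastCoord_general
    {N : ℕ} (μ : Fin (N + 1) → ℝ)
    (S : Matrix (Fin (N + 1)) (Fin (N + 1)) ℝ) (hS : S.PosDef)
    (pxi : ℝ → ℝ) (hmeas : Measurable pxi)
    (hnonneg : ∀ x, 0 ≤ pxi x)
    (hone : ∫ x in Set.Ioi (0 : ℝ), pxi x = 1)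
    (y : Fin N → ℝ) :
    ∫ t : ℝ, ellipticalDensity μ S pxi (Fin.snoc y t) =
      ellipticalDensity (fun i => μ i.castSucc)
        (S.submatrix Fin.castSucc Fin.castSucc) pxi y := by
  set A := S.submatrix Fin.castSucc Fin.castSucc
  have hA : A.PosDef := hS.submatrix (Fin.castSucc_injective N)
  set α := S⁻¹ (Fin.last N) (Fin.last N)
  have hα : 0 < α := hS.inv.diag_pos
  set x := y - Fin.init μ
  have hm : 0 ≤ x ⬝ᵥ A⁻¹ *ᵥ x := by simpa using hA.inv.posSemidef.dotProduct_mulVec_nonneg x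
  obtain ⟨s₀, hs₀⟩ := snoc_dotProduct_inv_mulVec_snoc S (isHermitian_iff_isSymm.1 hS.isHermitian)
    hS.det_pos.ne' hA.det_pos.ne' x
  have hquad : ∀ t, (Fin.snoc y t - μ) ⬝ᵥ S⁻¹ *ᵥ (Fin.snoc y t - μ) =
      α * (t - (μ (Fin.last N) + s₀)) ^ 2 + x ⬝ᵥ A⁻¹ *ᵥ x := fun t => by
    rw [Fin.snoc_sub, hs₀, sub_sub]
  have hpi : IntegrableOn pxi (Set.Ioi 0) := .of_integral_ne_zero (by simp [hone])
  calc ∫ t, ellipticalDensity μ S pxi (Fin.snoc y t)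
      = S.det ^ (-(1 : ℝ) / 2) * ∫ t, ∫ ξ in Set.Ioi 0,
          radialGaussianPDF (N + 1) ξ (α * (t - (μ (Fin.last N) + s₀)) ^ 2 + x ⬝ᵥ A⁻¹ *ᵥ x) *
            pxi ξ := by
        simp_rw [ellipticalDensity_eq, hquad]
        exact integral_const_mul _ _
    _ = S.det ^ (-(1 : ℝ) / 2) * (α ^ (-(1 : ℝ) / 2) *
          ∫ ξ in Set.Ioi 0, radialGaussianPDF N ξ (x ⬝ᵥ A⁻¹ *ᵥ x) * pxi ξ) := by
        rw [integral_setIntegral_radialGaussianPDF_succ hα hm _ hmeas (ae_of_all _ hnonneg) hpi]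
    _ = ellipticalDensity (fun i => μ i.castSucc) A pxi y := by
        rw [ellipticalDensity_eq, ← mul_assoc, ← mul_rpow hS.det_pos.le hα.le,
          det_mul_inv_apply_last_last S hS.det_pos.ne']
        rfl

/-- scale-mixture elliptical densities with a fixed mixing density are
closed under marginalization of the last coordinate (the 'if' direction of Kano's theorem). -/
theorem ellipticalDensity_marginal_lastCoord
    {N : ℕ} (hN : 1 ≤ N) (μ : Fin (N + 1) → ℝ)
    (S : Matrix (Fin (N + 1)) (Fin (N + 1)) ℝ) (hS : S.PosDef)
    (pxi : ℝ → ℝ) (hmeas : Measurable pxi)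
    (hnonneg : ∀ x, 0 ≤ pxi x) (hzero : ∀ x ≤ (0 : ℝ), pxi x = 0)
    (hone : ∫ x in Set.Ioi (0 : ℝ), pxi x = 1)
    (y : Fin N → ℝ) :
    ∫ t : ℝ, ellipticalDensity μ S pxi (Fin.snoc y t) =
      ellipticalDensity (fun i => μ i.castSucc)
        (S.submatrix Fin.castSucc Fin.castSucc) pxi y :=
  ellipticalDensity_marginal_lastCoord_general μ S hS pxi hmeas hnonneg hone y
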